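/- Let (A,Q) be a finite quadratic module which does not have even signature, i.e. (∑_{z∈A} e(−Q(z)))⁴ ≠ |A|². Then Inv(A,Q) = {0}; in fact, the only v ∈ ℂ[A] with Sv = v is v = 0. (The space of invariants of the Weil representation vanishes unless the signature of (A,Q) is even.) -/

import Mathlib

/-! With `g = ∑ z, e(-Q z)` and `B` the polar form of `Q`, the characters `y ↦ e(-B(x, y))` are
nontrivial for `x ≠ 0` by nondegeneracy, so orthogonality gives `S² v = (g² / |A|) • (v ∘ neg)`.
Applying this twice, a vector fixed by `S` satisfies `v = (g⁴ / |A|²) • v`, which forces `v = 0`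
unless `g⁴ = |A|²`. -/

open Finset

noncomputable def qe (q : AddCircle (1 : ℚ)) : ℂ :=
  Complex.exp (2 * (Real.pi : ℂ) * Complex.I * ((q.out : ℚ) : ℂ))

/-- `(A, Q)` is a finite quadratic module: `Q` is a nondegenerate quadratic form
with values in `ℚ/ℤ`. -/
def IsFQM {A : Type*} [AddCommGroup A] (Q : A → AddCircle (1 : ℚ)) : Prop :=
  (∀ (n : ℤ) (x : A), Q (n • x) = n ^ 2 • Q x) ∧
  (∀ x x' y : A,
      Q (x + x' + y) - Q (x + x') - Q y =
        (Q (x + y) - Q x - Q y) + (Q (x' + y) - Q x' - Q y)) ∧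
  (∀ x : A, (∀ y : A, Q (x + y) - Q x - Q y = 0) → x = 0)

/-- The standard basis vector `𝔢_x` of `ℂ[A]`. -/
noncomputable def indic {A : Type*} [DecidableEq A] (x : A) : A → ℂ :=
  fun y => if y = x then 1 else 0

/-- The Weil representation operator `T`. -/
noncomputable def weilT {A : Type*} [AddCommGroup A] [Fintype A]
    (Q : A → AddCircle (1 : ℚ)) : (A → ℂ) →ₗ[ℂ] (A → ℂ) where
  toFun v := fun x => qe (Q x) * v x
  map_add' u v := by funext x; simp [mul_add]
  map_smul' c v := by funext x; simp [smul_eq_mul]; ring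

/-- The Weil representation operator `S`. -/
noncomputable def weilS {A : Type*} [AddCommGroup A] [Fintype A]
    (Q : A → AddCircle (1 : ℚ)) : (A → ℂ) →ₗ[ℂ] (A → ℂ) where
  toFun v := fun y =>
    ((Fintype.card A : ℂ)⁻¹ * ∑ z, qe (-(Q z))) *
      ∑ x, qe (-(Q (x + y) - Q x - Q y)) * v x
  map_add' u v := by
    funext y
    simp only [Pi.add_apply, mul_add, Finset.sum_add_distrib]
  map_smul' c v := by
    funext y
    simp only [Pi.smul_apply, smul_eq_mul, RingHom.id_apply, Finset.mul_sum]
    exact Finset.sum_congr rfl fun x _ => by ring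

/-- The space of invariants of the Weil representation. -/
noncomputable def weilInv {A : Type*} [AddCommGroup A] [Fintype A]
    (Q : A → AddCircle (1 : ℚ)) : Submodule ℂ (A → ℂ) where
  carrier := {v | weilS Q v = v ∧ weilT Q v = v}
  add_mem' := by
    rintro u v ⟨hu1, hu2⟩ ⟨hv1, hv2⟩
    exact ⟨by rw [map_add, hu1, hv1], by rw [map_add, hu2, hv2]⟩
  zero_mem' := ⟨map_zero _, map_zero _⟩
  smul_mem' := by
    rintro c v ⟨h1, h2⟩
    exact ⟨by rw [map_smul, h1], by rw [map_smul, h2]⟩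

/-- `N` is the level of `(A,Q)`. -/
def IsLvl {A : Type*} [AddCommGroup A] (Q : A → AddCircle (1 : ℚ)) (N : ℕ) : Prop :=
  0 < N ∧ (∀ x, N • Q x = 0) ∧ ∀ M : ℕ, 0 < M → (∀ x, M • Q x = 0) → N ≤ M

open Complex in
lemma qe_coe (r : ℚ) : qe r = exp (2 * Real.pi * I * r) := by
  obtain ⟨n, hn⟩ : ∃ n : ℤ, n • (1 : ℚ) = (r : AddCircle (1 : ℚ)).out - r := by
    rw [← AddCircle.coe_eq_zero_iff, AddCircle.coe_sub, QuotientAddGroup.out_eq', sub_self]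
  rw [qe, exp_eq_exp_iff_exists_int]
  refine ⟨n, ?_⟩
  rw [eq_sub_iff_add_eq', zsmul_one] at hn
  rw [← hn]
  push_cast
  ring

noncomputable def qeChar : AddChar (AddCircle (1 : ℚ)) ℂ where
  toFun := qe
  map_zero_eq_one' := by simpa using qe_coe 0
  map_add_eq_mul' a b := by
    induction a using QuotientAddGroup.induction_on
    induction b using QuotientAddGroup.induction_on
    rw [← QuotientAddGroup.mk_add, qe_coe, qe_coe, qe_coe, ← Complex.exp_add]
    push_cast
    ring_nf

lemma qe_add (a b : AddCircle (1 : ℚ)) : qe (a + b) = qe a * qe b :=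
  qeChar.map_add_eq_mul a b

lemma qe_eq_one_iff (q : AddCircle (1 : ℚ)) : qe q = 1 ↔ q = 0 := by
  induction q using QuotientAddGroup.induction_on with
  | H r =>
    rw [qe_coe, Complex.exp_eq_one_iff, AddCircle.coe_eq_zero_iff]
    refine exists_congr fun n => ?_
    rw [zsmul_one, eq_comm, ← Rat.cast_inj (α := ℂ), mul_comm (n : ℂ),
      mul_right_inj' Complex.two_pi_I_ne_zero]
    norm_cast

section Polar

variable {A : Type*} [AddCommGroup A] (Q : A → AddCircle (1 : ℚ))

def polar (x y : A) : AddCircle (1 : ℚ) := Q (x + y) - Q x - Q y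

lemma polar_comm (x y : A) : polar Q x y = polar Q y x := by
  rw [polar, polar, add_comm x y, sub_right_comm]

variable {Q}

def polarHom (hadd : ∀ x x' y : A, polar Q (x + x') y = polar Q x y + polar Q x' y) (y : A) :
    A →+ AddCircle (1 : ℚ) :=
  AddMonoidHom.mk' (polar Q · y) (hadd · · y)

lemma polar_zero_left (hadd : ∀ x x' y : A, polar Q (x + x') y = polar Q x y + polar Q x' y)
    (y : A) : polar Q 0 y = 0 :=
  (polarHom hadd y).map_zero

lemma sum_qe_neg_polar [Fintype A] [DecidableEq A]
    (hadd : ∀ x x' y : A, polar Q (x + x') y = polar Q x y + polar Q x' y)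
    (hnd : ∀ x : A, (∀ y, polar Q x y = 0) → x = 0) (x : A) :
    ∑ y, qe (-polar Q x y) = if x = 0 then (Fintype.card A : ℂ) else 0 := by
  let ψ : AddChar A ℂ := qeChar.compAddMonoidHom (-polarHom hadd x)
  have hψ : ψ = 0 ↔ x = 0 := by
    simp only [AddChar.eq_zero_iff, ψ, AddChar.compAddMonoidHom_apply]
    change (∀ y, qe (-polar Q y x) = 1) ↔ x = 0
    simp only [qe_eq_one_iff, neg_eq_zero, polar_comm Q _ x]
    exact ⟨hnd x, by rintro rfl; exact polar_zero_left hadd⟩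
  simp only [polar_comm Q x, ← hψ]
  exact ψ.sum_eq_ite

end Polar

section Weil

variable {A : Type*} [AddCommGroup A] [Fintype A] {Q : A → AddCircle (1 : ℚ)}

lemma weilS_apply (v : A → ℂ) (y : A) :
    weilS Q v y =
      ((Fintype.card A : ℂ)⁻¹ * ∑ z, qe (-(Q z))) * ∑ x, qe (-polar Q x y) * v x :=
  rfl

lemma weilS_weilS_apply
    (hadd : ∀ x x' y : A, polar Q (x + x') y = polar Q x y + polar Q x' y)
    (hnd : ∀ x : A, (∀ y, polar Q x y = 0) → x = 0) (v : A → ℂ) (w : A) :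
    weilS Q (weilS Q v) w = (∑ z, qe (-(Q z))) ^ 2 / Fintype.card A * v (-w) := by
  classical
  set c := (Fintype.card A : ℂ)⁻¹ * ∑ z, qe (-(Q z))
  have hmul (x y : A) : qe (-polar Q y w) * qe (-polar Q x y) = qe (-polar Q (x + w) y) := by
    rw [hadd, polar_comm Q w, neg_add, qe_add, mul_comm]
  calc weilS Q (weilS Q v) w
      = c * ∑ y, qe (-polar Q y w) * (c * ∑ x, qe (-polar Q x y) * v x) := rfl
    _ = c ^ 2 * ∑ x, (∑ y, qe (-polar Q (x + w) y)) * v x := by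
        simp only [Finset.mul_sum, Finset.sum_mul]
        rw [Finset.sum_comm]
        refine sum_congr rfl fun x _ => sum_congr rfl fun y _ => ?_
        rw [← hmul]
        ring
    _ = c ^ 2 * ∑ x, (if -w = x then (Fintype.card A : ℂ) else 0) * v x := by
        simp_rw [sum_qe_neg_polar hadd hnd, add_eq_zero_iff_eq_neg, eq_comm (b := -w)]
    _ = (∑ z, qe (-(Q z))) ^ 2 / Fintype.card A * v (-w) := by
        simp only [ite_mul, zero_mul, Finset.sum_ite_eq, Finset.mem_univ, if_true, c]
        have hcard : (Fintype.card A : ℂ) ≠ 0 := Nat.cast_ne_zero.mpr Fintype.card_ne_zero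
        field_simp

lemma eq_zero_of_weilS_eq_self
    (hadd : ∀ x x' y : A, polar Q (x + x') y = polar Q x y + polar Q x' y)
    (hnd : ∀ x : A, (∀ y, polar Q x y = 0) → x = 0)
    (hodd : (∑ z, qe (-(Q z))) ^ 4 ≠ (Fintype.card A : ℂ) ^ 2) {v : A → ℂ}
    (hv : weilS Q v = v) : v = 0 := by
  set k := (∑ z, qe (-(Q z))) ^ 2 / Fintype.card A
  have hk : k ^ 2 ≠ 1 := by
    have hcard : (Fintype.card A : ℂ) ≠ 0 := Nat.cast_ne_zero.mpr Fintype.card_ne_zero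
    rwa [div_pow, ← pow_mul, ne_eq, div_eq_one_iff_eq (pow_ne_zero 2 hcard)]
  have hS2 (w : A) : v w = k * v (-w) := by
    rw [← weilS_weilS_apply hadd hnd, hv, hv]
  funext w
  have hS2' := hS2 (-w)
  rw [neg_neg] at hS2'
  have hvw : (1 - k ^ 2) * v w = 0 := by linear_combination hS2 w + k * hS2'
  exact (mul_eq_zero.mp hvw).resolve_left (sub_ne_zero.mpr hk.symm)

end Weil

/-- If the signature of `(A,Q)` is not even, then the only vector fixed by `S` is `0`;
in particular the space of invariants of the Weil representation vanishes. -/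
theorem stmt9 {A : Type*} [AddCommGroup A] [Fintype A]
    (Q : A → AddCircle (1 : ℚ)) (hQ : IsFQM Q)
    (hodd : (∑ z, qe (-(Q z))) ^ 4 ≠ (Fintype.card A : ℂ) ^ 2) :
    (∀ v : A → ℂ, weilS Q v = v → v = 0) ∧ weilInv Q = ⊥ := by
  have hfix (v : A → ℂ) (hv : weilS Q v = v) : v = 0 :=
    eq_zero_of_weilS_eq_self hQ.2.1 hQ.2.2 hodd hv
  exact ⟨hfix, (Submodule.eq_bot_iff _).mpr fun v hv => hfix v hv.1⟩
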